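/- POVM concavity of observational entropy: let {Π_{i|k}} be POVMs indexed by k, λ_k > 0 with ∑_k λ_k = 1, and define the mixed POVM Π_i = ∑_k λ_k Π_{i|k}. Then for any density matrix ρ, ∑_k λ_k S_{C_k}(ρ) ≤ S_C(ρ), where S_{C_k}(ρ) = -∑_i p_{i|k} ln(p_{i|k}/V_{i|k}) with p_{i|k} = Tr[Π_{i|k} ρ], V_{i|k} = Tr[Π_{i|k}], and S_C uses p_i = ∑_k λ_k p_{i|k}, V_i = ∑_k λ_k V_{i|k}. Equality holds iff p_{i|k} = V_{i|k} (p_i / V_i) for all i, k with Π_{i|k} ≠ 0. -/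

import Mathlib

/-!
For each outcome `i` the claim is the log-sum inequality applied to `a k = λ k * p i k` and
`b k = λ k * V i k`, summed over `i`. The log-sum inequality itself comes from the exact identity
`∑ a log (a / b) = A log (A / B) + ∑ b c klFun (a / (b c))` with `A = ∑ a`, `B = ∑ b`,
`c = A / B`, whose last sum is nonnegative and vanishes exactly when `a = b c` termwise.
-/

open Matrix ComplexOrder Real InformationTheory Finset

theorem Matrix.PosSemidef.trace_mul_nonneg {n 𝕜 : Type*} [Fintype n] [RCLike 𝕜]
    {A B : Matrix n n 𝕜} (hA : A.PosSemidef) (hB : B.PosSemidef) : 0 ≤ (A * B).trace := by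
  classical
  open MatrixOrder in
  obtain ⟨C, rfl⟩ := CStarAlgebra.nonneg_iff_eq_star_mul_self.mp hA.nonneg
  rw [star_eq_conjTranspose, Matrix.mul_assoc, trace_mul_comm]
  exact (hB.mul_mul_conjTranspose_same C).trace_nonneg

lemma mul_log_div_eq_add_mul_klFun {a b c : ℝ} (hb : 0 < b) (hc : 0 < c) :
    a * log (a / b) = a * log c + (a - b * c) + b * c * klFun (a / (b * c)) := by
  rcases eq_or_ne a 0 with rfl | ha
  · simp [klFun]
  rw [klFun_apply, show a / b = a / (b * c) * c by field_simp, log_mul (by positivity) hc.ne']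
  field_simp
  ring

lemma mul_klFun_div_nonneg {x y : ℝ} (hx : 0 ≤ x) (hy : 0 < y) : 0 ≤ y * klFun (x / y) :=
  mul_nonneg hy.le (klFun_nonneg (div_nonneg hx hy.le))

section LogSum

variable {ι : Type*} {s : Finset ι} {a b : ι → ℝ}

theorem sum_mul_log_div_eq_add_sum_klFun (hb : ∀ k ∈ s, 0 < b k) (hA : 0 < ∑ k ∈ s, a k) :
    ∑ k ∈ s, a k * log (a k / b k) =
      (∑ k ∈ s, a k) * log ((∑ k ∈ s, a k) / ∑ k ∈ s, b k) +
        ∑ k ∈ s, b k * ((∑ k ∈ s, a k) / ∑ k ∈ s, b k) *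
          klFun (a k / (b k * ((∑ k ∈ s, a k) / ∑ k ∈ s, b k))) := by
  set A := ∑ k ∈ s, a k
  set B := ∑ k ∈ s, b k
  have hB : 0 < B := sum_pos hb (nonempty_of_sum_ne_zero hA.ne')
  rw [sum_congr rfl fun k hk => mul_log_div_eq_add_mul_klFun (hb k hk) (div_pos hA hB),
    sum_add_distrib, sum_add_distrib, sum_sub_distrib, ← sum_mul, ← sum_mul]
  field_simp
  ring

lemma sum_mul_log_div_eq_zero_of_sum_eq_zero (ha : ∀ k ∈ s, 0 ≤ a k)
    (hA : ∑ k ∈ s, a k = 0) : ∑ k ∈ s, a k * log (a k / b k) = 0 :=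
  sum_eq_zero fun k hk => by simp [(sum_eq_zero_iff_of_nonneg ha).mp hA k hk]

theorem mul_log_div_le_sum_mul_log_div (ha : ∀ k ∈ s, 0 ≤ a k) (hb : ∀ k ∈ s, 0 < b k) :
    (∑ k ∈ s, a k) * log ((∑ k ∈ s, a k) / ∑ k ∈ s, b k) ≤ ∑ k ∈ s, a k * log (a k / b k) := by
  rcases (sum_nonneg ha).eq_or_lt with hA | hA
  · rw [← hA, zero_mul, sum_mul_log_div_eq_zero_of_sum_eq_zero ha hA.symm]
  have hc : 0 < (∑ k ∈ s, a k) / ∑ k ∈ s, b k :=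
    div_pos hA (sum_pos hb (nonempty_of_sum_ne_zero hA.ne'))
  rw [sum_mul_log_div_eq_add_sum_klFun hb hA]
  exact le_add_of_nonneg_right <| sum_nonneg fun k hk =>
    mul_klFun_div_nonneg (ha k hk) (mul_pos (hb k hk) hc)

theorem mul_log_div_eq_sum_mul_log_div_iff (ha : ∀ k ∈ s, 0 ≤ a k) (hb : ∀ k ∈ s, 0 < b k) :
    (∑ k ∈ s, a k) * log ((∑ k ∈ s, a k) / ∑ k ∈ s, b k) = ∑ k ∈ s, a k * log (a k / b k) ↔
      ∀ k ∈ s, a k = b k * ((∑ k ∈ s, a k) / ∑ k ∈ s, b k) := by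
  rcases (sum_nonneg ha).eq_or_lt with hA | hA
  · rw [← hA, zero_mul, zero_div, sum_mul_log_div_eq_zero_of_sum_eq_zero ha hA.symm]
    simpa using (sum_eq_zero_iff_of_nonneg ha).mp hA.symm
  have hc : 0 < (∑ k ∈ s, a k) / ∑ k ∈ s, b k :=
    div_pos hA (sum_pos hb (nonempty_of_sum_ne_zero hA.ne'))
  rw [sum_mul_log_div_eq_add_sum_klFun hb hA, left_eq_add, sum_eq_zero_iff_of_nonneg]
  · refine forall₂_congr fun k hk => ?_
    have hbc := mul_pos (hb k hk) hc
    rw [mul_eq_zero_iff_left hbc.ne', klFun_eq_zero_iff (div_nonneg (ha k hk) hbc.le),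
      div_eq_one_iff_eq hbc.ne']
  · exact fun k hk => mul_klFun_div_nonneg (ha k hk) (mul_pos (hb k hk) hc)

lemma mul_log_mul_div_mul_left {w x y : ℝ} (hw : w ≠ 0) :
    w * x * log (w * x / (w * y)) = w * (x * log (x / y)) := by
  rw [mul_div_mul_left x y hw, mul_assoc]

theorem sum_mul_log_div_le_of_weights {w x y : ι → ℝ} (hw : ∀ k ∈ s, 0 < w k)
    (hx : ∀ k ∈ s, 0 ≤ x k) (hy : ∀ k ∈ s, 0 < y k) :
    (∑ k ∈ s, w k * x k) * log ((∑ k ∈ s, w k * x k) / ∑ k ∈ s, w k * y k) ≤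
      ∑ k ∈ s, w k * (x k * log (x k / y k)) := by
  rw [← sum_congr rfl fun k hk => mul_log_mul_div_mul_left (hw k hk).ne']
  exact mul_log_div_le_sum_mul_log_div (fun k hk => mul_nonneg (hw k hk).le (hx k hk))
    fun k hk => mul_pos (hw k hk) (hy k hk)

theorem sum_mul_log_div_eq_of_weights_iff {w x y : ι → ℝ} (hw : ∀ k ∈ s, 0 < w k)
    (hx : ∀ k ∈ s, 0 ≤ x k) (hy : ∀ k ∈ s, 0 < y k) :
    (∑ k ∈ s, w k * x k) * log ((∑ k ∈ s, w k * x k) / ∑ k ∈ s, w k * y k) =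
        ∑ k ∈ s, w k * (x k * log (x k / y k)) ↔
      ∀ k ∈ s, x k = y k * ((∑ k ∈ s, w k * x k) / ∑ k ∈ s, w k * y k) := by
  rw [← sum_congr rfl fun k hk => mul_log_mul_div_mul_left (hw k hk).ne',
    mul_log_div_eq_sum_mul_log_div_iff (fun k hk => mul_nonneg (hw k hk).le (hx k hk))
      fun k hk => mul_pos (hw k hk) (hy k hk)]
  refine forall₂_congr fun k hk => ?_
  rw [mul_assoc, mul_right_inj' (hw k hk).ne']

end LogSum

theorem obs_entropy_povm_concavity_general {d : ℕ} {ι κ : Type*} [Fintype ι] [Fintype κ]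
    (P : ι → κ → Matrix (Fin d) (Fin d) ℂ)
    (hP : ∀ i k, (P i k).PosSemidef)
    (lam : κ → ℝ) (hlam : ∀ k, 0 < lam k)
    (ρ : Matrix (Fin d) (Fin d) ℂ) (hρ : ρ.PosSemidef)
    (p V : ι → κ → ℝ) (pmix Vmix : ι → ℝ)
    (hpdef : ∀ i k, p i k = (P i k * ρ).trace.re)
    (hVpos : ∀ i k, 0 < V i k)
    (hpmix : ∀ i, pmix i = ∑ k, lam k * p i k)
    (hVmix : ∀ i, Vmix i = ∑ k, lam k * V i k) :
    (∑ k, lam k * (-∑ i, p i k * Real.log (p i k / V i k))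
        ≤ -∑ i, pmix i * Real.log (pmix i / Vmix i))
    ∧ ((∑ k, lam k * (-∑ i, p i k * Real.log (p i k / V i k))
        = -∑ i, pmix i * Real.log (pmix i / Vmix i))
      ↔ ∀ i k, p i k = V i k * (pmix i / Vmix i)) := by
  have hp : ∀ i k, 0 ≤ p i k := fun i k =>
    hpdef i k ▸ (RCLike.nonneg_iff.mp ((hP i k).trace_mul_nonneg hρ)).1
  have hswap : ∑ k, lam k * (-∑ i, p i k * log (p i k / V i k)) =
      -∑ i, ∑ k, lam k * (p i k * log (p i k / V i k)) := by
    simp only [mul_neg, sum_neg_distrib, mul_sum]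
    rw [sum_comm]
  have hle (i : ι) :
      pmix i * log (pmix i / Vmix i) ≤ ∑ k, lam k * (p i k * log (p i k / V i k)) := by
    rw [hpmix, hVmix]
    exact sum_mul_log_div_le_of_weights (fun k _ => hlam k) (fun k _ => hp i k)
      fun k _ => hVpos i k
  rw [hswap, neg_le_neg_iff, neg_inj, eq_comm, sum_eq_sum_iff_of_le fun i _ => hle i]
  refine ⟨sum_le_sum fun i _ => hle i, ?_⟩
  simp only [mem_univ, forall_const]
  refine forall_congr' fun i => ?_
  rw [hpmix, hVmix, sum_mul_log_div_eq_of_weights_iff (fun k _ => hlam k) (fun k _ => hp i k)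
    fun k _ => hVpos i k]
  simp only [mem_univ, forall_const]

/-- POVM concavity of observational entropy for a convex combination of
POVMs, with the equality condition on probability-to-volume ratios. -/
theorem obs_entropy_povm_concavity {d : ℕ} {ι κ : Type*} [Fintype ι] [Fintype κ]
    (P : ι → κ → Matrix (Fin d) (Fin d) ℂ)
    (hP : ∀ i k, (P i k).PosSemidef) (hsum : ∀ k, ∑ i, P i k = 1)
    (lam : κ → ℝ) (hlam : ∀ k, 0 < lam k) (hlamsum : ∑ k, lam k = 1)
    (ρ : Matrix (Fin d) (Fin d) ℂ) (hρ : ρ.PosSemidef) (hρtr : ρ.trace = 1)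
    (p V : ι → κ → ℝ) (pmix Vmix : ι → ℝ)
    (hpdef : ∀ i k, p i k = (P i k * ρ).trace.re)
    (hVdef : ∀ i k, V i k = (P i k).trace.re)
    (hVpos : ∀ i k, 0 < V i k)
    (hpmix : ∀ i, pmix i = ∑ k, lam k * p i k)
    (hVmix : ∀ i, Vmix i = ∑ k, lam k * V i k) :
    (∑ k, lam k * (-∑ i, p i k * Real.log (p i k / V i k))
        ≤ -∑ i, pmix i * Real.log (pmix i / Vmix i))
    ∧ ((∑ k, lam k * (-∑ i, p i k * Real.log (p i k / V i k))
        = -∑ i, pmix i * Real.log (pmix i / Vmix i))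
      ↔ ∀ i k, p i k = V i k * (pmix i / Vmix i)) :=
  obs_entropy_povm_concavity_general P hP lam hlam ρ hρ p V pmix Vmix hpdef hVpos hpmix hVmix
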